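/- arXiv:1211.5914 — 5 statements merged into one kernel-verified Lean document; each statement's English description precedes it below -/
import Mathlib

section
/- Let Φ = {φ_n} and Ψ = {ψ_n} be two orthonormal bases of ℂ^N with mutual coherence μ = max_{j,k} |⟨φ_j, ψ_k⟩|. For any nonzero x ∈ ℂ^N, let α and β be the coefficient vectors of x in Φ and Ψ respectively. Then ‖α‖₀ · ‖β‖₀ ≥ 1/μ². -/
/-!
Expanding a basis vector `ψ_k` in the basis `Φ` gives `|β_k| ≤ μ ‖α‖₁`, and Cauchy–Schwarz over
the support of `α` gives `‖α‖₁² ≤ ‖α‖₀ ‖α‖₂²`. Summing `|β_k|²` over the support of `β` and using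
Parseval `‖α‖₂ = ‖β‖₂ = ‖x‖` yields `‖x‖² ≤ μ² ‖α‖₀ ‖β‖₀ ‖x‖²`.
-/

open Finset

open scoped InnerProductSpace

section Support

variable {ι G : Type*} [Fintype ι] [NormedAddCommGroup G] [DecidableEq G]

lemma sum_filter_ne_zero_comp (f : ι → G) {g : G → ℝ} (hg : g 0 = 0) :
    ∑ i ∈ ({i | f i ≠ 0} : Finset ι), g (f i) = ∑ i, g (f i) :=
  sum_filter_of_ne fun i _ hi hfi => hi (by rw [hfi, hg])

lemma sq_sum_norm_le_card_support_mul_sum_sq_norm (f : ι → G) :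
    (∑ i, ‖f i‖) ^ 2 ≤ #{i | f i ≠ 0} * ∑ i, ‖f i‖ ^ 2 := by
  rw [← sum_filter_ne_zero_comp f norm_zero,
    ← sum_filter_ne_zero_comp f (g := fun y => ‖y‖ ^ 2) (by simp)]
  exact sq_sum_le_card_mul_sum_sq

lemma sum_sq_norm_le_card_support_mul_sq (f : ι → G) {M : ℝ} (hf : ∀ i, ‖f i‖ ≤ M) :
    ∑ i, ‖f i‖ ^ 2 ≤ #{i | f i ≠ 0} * M ^ 2 := by
  rw [← sum_filter_ne_zero_comp f (g := fun y => ‖y‖ ^ 2) (by simp), ← nsmul_eq_mul]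
  exact sum_le_card_nsmul _ _ _ fun i _ => pow_le_pow_left₀ (norm_nonneg _) (hf i) 2

end Support

namespace OrthonormalBasis

variable {𝕜 E ι κ : Type*} [RCLike 𝕜] [NormedAddCommGroup E] [InnerProductSpace 𝕜 E]
  [Fintype ι] [Fintype κ]

lemma norm_inner_le_mul_sum_norm_inner (b : OrthonormalBasis ι 𝕜 E) {v : E} {μ : ℝ}
    (hμ : ∀ i, ‖⟪b i, v⟫_𝕜‖ ≤ μ) (x : E) : ‖⟪x, v⟫_𝕜‖ ≤ μ * ∑ i, ‖⟪x, b i⟫_𝕜‖ := by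
  rw [← b.sum_inner_mul_inner x v, mul_comm, sum_mul]
  calc ‖∑ i, ⟪x, b i⟫_𝕜 * ⟪b i, v⟫_𝕜‖
      ≤ ∑ i, ‖⟪x, b i⟫_𝕜‖ * ‖⟪b i, v⟫_𝕜‖ := by
        simpa only [norm_mul] using norm_sum_le univ fun i => ⟪x, b i⟫_𝕜 * ⟪b i, v⟫_𝕜
    _ ≤ ∑ i, ‖⟪x, b i⟫_𝕜‖ * μ := by gcongr with i; exact hμ i

lemma norm_sq_le_coherence_sq_mul_card_support_mul [DecidableEq 𝕜]
    (b : OrthonormalBasis ι 𝕜 E) (b' : OrthonormalBasis κ 𝕜 E) {μ : ℝ}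
    (hμ : ∀ i k, ‖⟪b i, b' k⟫_𝕜‖ ≤ μ) (x : E) :
    ‖x‖ ^ 2 ≤ μ ^ 2 * (#{i | ⟪x, b i⟫_𝕜 ≠ 0} * #{k | ⟪x, b' k⟫_𝕜 ≠ 0}) * ‖x‖ ^ 2 := by
  set S := ∑ i, ‖⟪x, b i⟫_𝕜‖
  have hβ (k : κ) : ‖⟪x, b' k⟫_𝕜‖ ≤ μ * S := b.norm_inner_le_mul_sum_norm_inner (hμ · k) x
  have hS : S ^ 2 ≤ #{i | ⟪x, b i⟫_𝕜 ≠ 0} * ‖x‖ ^ 2 := by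
    simpa only [b.sum_sq_norm_inner_left] using
      sq_sum_norm_le_card_support_mul_sum_sq_norm fun i => ⟪x, b i⟫_𝕜
  calc ‖x‖ ^ 2 = ∑ k, ‖⟪x, b' k⟫_𝕜‖ ^ 2 := (b'.sum_sq_norm_inner_left x).symm
    _ ≤ #{k | ⟪x, b' k⟫_𝕜 ≠ 0} * (μ * S) ^ 2 := sum_sq_norm_le_card_support_mul_sq _ hβ
    _ = μ ^ 2 * #{k | ⟪x, b' k⟫_𝕜 ≠ 0} * S ^ 2 := by ring
    _ ≤ μ ^ 2 * #{k | ⟪x, b' k⟫_𝕜 ≠ 0} * (#{i | ⟪x, b i⟫_𝕜 ≠ 0} * ‖x‖ ^ 2) := by gcongr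
    _ = _ := by ring

end OrthonormalBasis

theorem elad_bruckstein_product
    {N : ℕ} (Φ Ψ : OrthonormalBasis (Fin N) ℂ (EuclideanSpace ℂ (Fin N)))
    (μ : ℝ) (hμ : μ = ⨆ j : Fin N, ⨆ k : Fin N, ‖(inner ℂ (Φ j) (Ψ k) : ℂ)‖)
    (x : EuclideanSpace ℂ (Fin N)) (hx : x ≠ 0) :
    (1 : ℝ) / μ ^ 2 ≤
      ((Finset.univ.filter fun n => (inner ℂ x (Φ n) : ℂ) ≠ 0).card : ℝ) *
      ((Finset.univ.filter fun n => (inner ℂ x (Ψ n) : ℂ) ≠ 0).card : ℝ) := by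
  have hcoh (j k : Fin N) : ‖(inner ℂ (Φ j) (Ψ k) : ℂ)‖ ≤ μ :=
    hμ ▸ le_ciSup_of_le (Set.finite_range _).bddAbove j
      (le_ciSup (f := fun k => ‖(inner ℂ (Φ j) (Ψ k) : ℂ)‖) (Set.finite_range _).bddAbove k)
  have key := Φ.norm_sq_le_coherence_sq_mul_card_support_mul Ψ hcoh x
  have hprod : 1 ≤ μ ^ 2 * (#{n | inner ℂ x (Φ n) ≠ 0} * #{n | inner ℂ x (Ψ n) ≠ 0}) :=
    le_of_mul_le_mul_right (by rwa [one_mul]) (by positivity)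
  have hμ2 : 0 < μ ^ 2 := by
    refine (sq_nonneg μ).lt_of_ne fun h => ?_
    rw [← h, zero_mul] at hprod
    norm_num at hprod
  rw [div_le_iff₀ hμ2]
  linarith
end

section
/- Let Φ and Ψ be two orthonormal bases of ℂ^N with mutual coherence μ. For any nonzero x ∈ ℂ^N with coefficient vectors α in Φ and β in Ψ, ‖α‖₀ + ‖β‖₀ ≥ 2/μ. -/
/-!
Expanding `x` first in `Φ` and then each `Φ j` in `Ψ` gives
`‖x‖² = ∑ⱼ ∑ₖ ⟪x, φⱼ⟫ ⟪φⱼ, ψₖ⟫ ⟪ψₖ, x⟫ ≤ μ ‖α‖₁ ‖β‖₁`.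
By Cauchy–Schwarz on the supports and Parseval, `‖α‖₁² ≤ ‖α‖₀ ‖x‖²` and likewise for `β`,
so `1 ≤ μ² ‖α‖₀ ‖β‖₀`; the arithmetic–geometric mean inequality turns this product bound
into `2 / μ ≤ ‖α‖₀ + ‖β‖₀`.
-/

open Finset
open scoped InnerProductSpace

namespace OrthonormalBasis

variable {ι ι' 𝕜 E : Type*} [Fintype ι] [Fintype ι'] [RCLike 𝕜]
  [NormedAddCommGroup E] [InnerProductSpace 𝕜 E]

theorem sq_sum_norm_inner_le_card_support_mul (b : OrthonormalBasis ι 𝕜 E) (x : E) :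
    (∑ i, ‖⟪x, b i⟫_𝕜‖) ^ 2 ≤ #{i | ⟪x, b i⟫_𝕜 ≠ 0} * ‖x‖ ^ 2 := by
  have h_supp : ∑ i, ‖⟪x, b i⟫_𝕜‖ = ∑ i ∈ {i | ⟪x, b i⟫_𝕜 ≠ 0}, ‖⟪x, b i⟫_𝕜‖ :=
    (sum_filter_of_ne fun i _ h => by simpa using h).symm
  calc (∑ i, ‖⟪x, b i⟫_𝕜‖) ^ 2
      ≤ #{i | ⟪x, b i⟫_𝕜 ≠ 0} * ∑ i ∈ {i | ⟪x, b i⟫_𝕜 ≠ 0}, ‖⟪x, b i⟫_𝕜‖ ^ 2 :=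
        h_supp ▸ sq_sum_le_card_mul_sum_sq
    _ ≤ #{i | ⟪x, b i⟫_𝕜 ≠ 0} * ∑ i, ‖⟪x, b i⟫_𝕜‖ ^ 2 := by
        gcongr
        exact subset_univ _
    _ = #{i | ⟪x, b i⟫_𝕜 ≠ 0} * ‖x‖ ^ 2 := by rw [b.sum_sq_norm_inner_left]

theorem norm_sq_le_mul_sum_norm_inner_mul_sum_norm_inner (b₁ : OrthonormalBasis ι 𝕜 E)
    (b₂ : OrthonormalBasis ι' 𝕜 E) {μ : ℝ} (hμ : ∀ j k, ‖⟪b₁ j, b₂ k⟫_𝕜‖ ≤ μ) (x : E) :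
    ‖x‖ ^ 2 ≤ μ * ((∑ j, ‖⟪x, b₁ j⟫_𝕜‖) * ∑ k, ‖⟪x, b₂ k⟫_𝕜‖) := by
  have h_expand : ⟪x, x⟫_𝕜 = ∑ j, ∑ k, ⟪x, b₁ j⟫_𝕜 * ⟪b₁ j, b₂ k⟫_𝕜 * ⟪b₂ k, x⟫_𝕜 := by
    simp_rw [mul_assoc, ← mul_sum, b₂.sum_inner_mul_inner, b₁.sum_inner_mul_inner]
  calc ‖x‖ ^ 2 = ‖⟪x, x⟫_𝕜‖ := by
        rw [inner_self_eq_norm_sq_to_K, norm_pow, RCLike.norm_ofReal, abs_norm]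
    _ ≤ ∑ j, ∑ k, ‖⟪x, b₁ j⟫_𝕜‖ * ‖⟪b₁ j, b₂ k⟫_𝕜‖ * ‖⟪x, b₂ k⟫_𝕜‖ := by
        rw [h_expand]
        refine (norm_sum_le _ _).trans (sum_le_sum fun j _ => (norm_sum_le _ _).trans_eq ?_)
        simp_rw [norm_mul, norm_inner_symm (b₂ _)]
    _ ≤ ∑ j, ∑ k, ‖⟪x, b₁ j⟫_𝕜‖ * μ * ‖⟪x, b₂ k⟫_𝕜‖ := by gcongr with j _ k; exact hμ j k
    _ = μ * ((∑ j, ‖⟪x, b₁ j⟫_𝕜‖) * ∑ k, ‖⟪x, b₂ k⟫_𝕜‖) := by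
        simp_rw [sum_mul_sum, mul_sum]
        exact sum_congr rfl fun _ _ => sum_congr rfl fun _ _ => by ring

theorem one_le_sq_mul_card_support_mul_card_support (b₁ : OrthonormalBasis ι 𝕜 E)
    (b₂ : OrthonormalBasis ι' 𝕜 E) {μ : ℝ} (hμ : ∀ j k, ‖⟪b₁ j, b₂ k⟫_𝕜‖ ≤ μ) {x : E}
    (hx : x ≠ 0) :
    1 ≤ μ ^ 2 * ((#{j | ⟪x, b₁ j⟫_𝕜 ≠ 0} : ℝ) * #{k | ⟪x, b₂ k⟫_𝕜 ≠ 0}) := by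
  have hx2 : 0 < (‖x‖ ^ 2) ^ 2 := by positivity
  refine le_of_mul_le_mul_right ?_ hx2
  calc 1 * (‖x‖ ^ 2) ^ 2
      ≤ μ ^ 2 * ((∑ j, ‖⟪x, b₁ j⟫_𝕜‖) ^ 2 * (∑ k, ‖⟪x, b₂ k⟫_𝕜‖) ^ 2) := by
        rw [one_mul, ← mul_pow, ← mul_pow]
        gcongr
        exact norm_sq_le_mul_sum_norm_inner_mul_sum_norm_inner b₁ b₂ hμ x
    _ ≤ μ ^ 2 * ((#{j | ⟪x, b₁ j⟫_𝕜 ≠ 0} * ‖x‖ ^ 2) * (#{k | ⟪x, b₂ k⟫_𝕜 ≠ 0} * ‖x‖ ^ 2)) := by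
        gcongr
        · exact b₁.sq_sum_norm_inner_le_card_support_mul x
        · exact b₂.sq_sum_norm_inner_le_card_support_mul x
    _ = μ ^ 2 * ((#{j | ⟪x, b₁ j⟫_𝕜 ≠ 0} : ℝ) * #{k | ⟪x, b₂ k⟫_𝕜 ≠ 0}) * (‖x‖ ^ 2) ^ 2 := by
        ring

end OrthonormalBasis

theorem two_div_le_add_of_one_le_sq_mul_mul {μ a b : ℝ} (hμ : 0 ≤ μ) (hab : 0 ≤ a + b)
    (h : 1 ≤ μ ^ 2 * (a * b)) : 2 / μ ≤ a + b := by
  have hμ_pos : 0 < μ := hμ.lt_of_ne (by rintro rfl; norm_num at h)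
  rw [div_le_iff₀ hμ_pos]
  nlinarith [sq_nonneg (μ * (a - b)), mul_nonneg hab hμ]

theorem elad_bruckstein_sum
    {N : ℕ} (Φ Ψ : OrthonormalBasis (Fin N) ℂ (EuclideanSpace ℂ (Fin N)))
    (μ : ℝ) (hμ : μ = ⨆ j : Fin N, ⨆ k : Fin N, ‖(inner ℂ (Φ j) (Ψ k) : ℂ)‖)
    (x : EuclideanSpace ℂ (Fin N)) (hx : x ≠ 0) :
    (2 : ℝ) / μ ≤
      ((Finset.univ.filter fun n => (inner ℂ x (Φ n) : ℂ) ≠ 0).card : ℝ) +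
      ((Finset.univ.filter fun n => (inner ℂ x (Ψ n) : ℂ) ≠ 0).card : ℝ) := by
  have h_coh (j k) : ‖⟪Φ j, Ψ k⟫_ℂ‖ ≤ μ := by
    rw [hμ]
    exact le_ciSup_of_le (Set.finite_range _).bddAbove j
      (le_ciSup (f := fun k => ‖⟪Φ j, Ψ k⟫_ℂ‖) (Set.finite_range _).bddAbove k)
  have hμ_nonneg : 0 ≤ μ := hμ ▸ Real.iSup_nonneg fun _ => Real.iSup_nonneg fun _ => norm_nonneg _
  exact two_div_le_add_of_one_le_sq_mul_mul hμ_nonneg (by positivity)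
    (Φ.one_le_sq_mul_card_support_mul_card_support Ψ h_coh hx)
end

section
/- Let Φ and Ψ be orthonormal bases of ℂ^N with mutual coherence μ. For any x ∈ ℂ^N with ‖x‖₂ = 1, the Shannon entropies of the squared-modulus coefficient distributions satisfy S(α) + S(β) ≥ −2 ln μ, where S(α) = −Σ_n |α_n|² ln |α_n|². -/
/-!
Write `α`, `β` for the coefficient vectors of `x`, so that `β = α ᵥ* M` with
`M j k = ⟪Φ j, Ψ k⟫`. The matrix `M` is an `ℓ²`-contraction and its entries are bounded by `μ`,
so Riesz–Thorin interpolation gives `‖β‖_q ≤ μ ^ θ * ‖α‖_p` for `p = 2 / (1 + θ)`,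
`q = 2 / (1 - θ)` and `0 ≤ θ < 1`; the interpolation is Hadamard's three lines theorem applied to
the bilinear form of `M` along the analytic family `a ↦ (a / ‖a‖) * ‖a‖ ^ ((1 + z) / (1 + θ))`.
At `θ = 0` both sides equal `1` by Parseval, so the derivatives at `θ = 0` of their logarithms
compare as well, and these derivatives are `-(S(β) / 2)` and `log μ + S(α) / 2`.
-/

open Set Filter Topology Matrix

variable {ι κ : Type*} [Fintype ι]

namespace Complex

/-- For `a ≠ 0` this is `(a / ‖a‖) * ‖a‖ ^ w`; unlike that formula it is entire in `w` also
for `a = 0`. -/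
noncomputable def phasePow (a w : ℂ) : ℂ := a * exp ((w - 1) * Real.log ‖a‖)

@[simp]
theorem phasePow_one (a : ℂ) : phasePow a 1 = a := by simp [phasePow]

theorem differentiable_phasePow (a : ℂ) : Differentiable ℂ (phasePow a) := by
  unfold phasePow; fun_prop

theorem norm_phasePow (a : ℂ) {w : ℂ} (hw : 0 < w.re) : ‖phasePow a w‖ = ‖a‖ ^ w.re := by
  rcases eq_or_ne a 0 with rfl | ha
  · simp [phasePow, Real.zero_rpow hw.ne']
  · have ha' : 0 < ‖a‖ := norm_pos_iff.2 ha
    rw [phasePow, norm_mul, norm_exp, re_mul_ofReal, sub_re, one_re, mul_comm (w.re - 1),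
      ← Real.rpow_def_of_pos ha', ← Real.rpow_one_add' ha'.le (by linarith), add_sub_cancel]

theorem sum_norm_phasePow_rpow_le_one {a : ι → ℂ} {s : ℝ}
    (ha : ∑ j, ‖a j‖ ^ s ≤ 1) {w : ℂ} (hw : 0 < w.re) {r : ℝ} (hr : w.re * r = s) :
    ∑ j, ‖phasePow (a j) w‖ ^ r ≤ 1 := by
  simp_rw [norm_phasePow _ hw, ← Real.rpow_mul (norm_nonneg _), hr]
  exact ha

theorem norm_phasePow_le_one {a : ι → ℂ} {s : ℝ} (hs : 0 < s)
    (ha : ∑ j, ‖a j‖ ^ s ≤ 1) (j : ι) {w : ℂ} (hw : 0 < w.re) : ‖phasePow (a j) w‖ ≤ 1 := by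
  have haj : ‖a j‖ ≤ 1 := by
    by_contra! h
    have := Finset.single_le_sum (fun i _ => Real.rpow_nonneg (norm_nonneg (a i)) s)
      (Finset.mem_univ j)
    linarith [Real.one_lt_rpow h hs]
  rw [norm_phasePow _ hw]
  exact Real.rpow_le_one (norm_nonneg _) haj hw.le

end Complex

open Complex

section Interpolation

variable [Fintype κ]

theorem norm_vecMul_dotProduct_le {M : Matrix ι κ ℂ} {μ : ℝ} (hM : ∀ j k, ‖M j k‖ ≤ μ)
    (a : ι → ℂ) (c : κ → ℂ) : ‖(a ᵥ* M) ⬝ᵥ c‖ ≤ μ * (∑ j, ‖a j‖) * ∑ k, ‖c k‖ := by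
  calc ‖(a ᵥ* M) ⬝ᵥ c‖ ≤ ∑ k, ∑ j, ‖a j‖ * ‖M j k‖ * ‖c k‖ := by
        simp only [dotProduct, vecMul, Finset.sum_mul]
        refine (norm_sum_le _ _).trans (Finset.sum_le_sum fun k _ => ?_)
        refine (norm_sum_le _ _).trans (Finset.sum_le_sum fun j _ => ?_)
        rw [norm_mul, norm_mul]
    _ ≤ ∑ k, ∑ j, ‖a j‖ * μ * ‖c k‖ := by gcongr with k _ j _; exact hM j k
    _ = μ * (∑ j, ‖a j‖) * ∑ k, ‖c k‖ := by
        simp only [Finset.mul_sum, Finset.sum_mul]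
        exact Finset.sum_congr rfl fun _ _ => Finset.sum_congr rfl fun _ _ => by ring

theorem norm_vecMul_dotProduct_le_rpow {M : Matrix ι κ ℂ} {μ θ : ℝ}
    (hμ : 0 ≤ μ) (hM : ∀ j k, ‖M j k‖ ≤ μ)
    (hM₂ : ∀ a c, ‖(a ᵥ* M) ⬝ᵥ c‖ ≤ √(∑ j, ‖a j‖ ^ 2) * √(∑ k, ‖c k‖ ^ 2))
    (hθ : θ ∈ Icc (0 : ℝ) 1) {a : ι → ℂ} {c : κ → ℂ}
    (ha : ∑ j, ‖a j‖ ^ (2 / (1 + θ)) ≤ 1) (hc : ∑ k, ‖c k‖ ^ (2 / (1 + θ)) ≤ 1) :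
    ‖(a ᵥ* M) ⬝ᵥ c‖ ≤ μ ^ θ := by
  have hθ₁ : 0 < 1 + θ := by linarith [hθ.1]
  set e : ℂ → ℂ := fun z => (1 + z) / ((1 + θ : ℝ) : ℂ)
  have he_re (z : ℂ) : (e z).re = (1 + z.re) / (1 + θ) := by
    simp only [e, div_ofReal_re, add_re, one_re]
  have he_pos {z : ℂ} (hz : 0 ≤ z.re) : 0 < (e z).re := by rw [he_re]; positivity
  -- On `re z = 0` the two vectors are `ℓ²`-unit vectors, on `re z = 1` they are `ℓ¹`-unit
  -- vectors, and at `z = θ` they are `a` and `c`.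
  set F : ℂ → ℂ := fun z =>
    ((fun j => phasePow (a j) (e z)) ᵥ* M) ⬝ᵥ fun k => phasePow (c k) (e z)
  have hF : Differentiable ℂ F := by
    have he : Differentiable ℂ e := by fun_prop
    have hpow (b : ℂ) : Differentiable ℂ fun z => phasePow b (e z) :=
      (differentiable_phasePow b).comp he
    simp only [F, dotProduct, vecMul]
    fun_prop
  have hp : 0 < 2 / (1 + θ) := by positivity
  have h₀ : ∀ z ∈ re ⁻¹' {0}, ‖F z‖ ≤ 1 := by
    rintro z (hz : z.re = 0)
    have hw := he_pos hz.ge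
    have hr : (e z).re * 2 = 2 / (1 + θ) := by rw [he_re, hz]; ring
    have ha' := sum_norm_phasePow_rpow_le_one ha hw hr
    have hc' := sum_norm_phasePow_rpow_le_one hc hw hr
    simp only [Real.rpow_two] at ha' hc'
    calc ‖F z‖ ≤ √(∑ j, ‖phasePow (a j) (e z)‖ ^ 2) * √(∑ k, ‖phasePow (c k) (e z)‖ ^ 2) :=
          hM₂ _ _
      _ ≤ √1 * √1 := by gcongr
      _ = 1 := by simp
  have h₁ : ∀ z ∈ re ⁻¹' {1}, ‖F z‖ ≤ μ := by
    rintro z (hz : z.re = 1)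
    have hw := he_pos (hz ▸ zero_le_one)
    have hr : (e z).re * 1 = 2 / (1 + θ) := by rw [he_re, hz]; ring
    have ha' := sum_norm_phasePow_rpow_le_one ha hw hr
    have hc' := sum_norm_phasePow_rpow_le_one hc hw hr
    simp only [Real.rpow_one] at ha' hc'
    calc ‖F z‖ ≤ μ * (∑ j, ‖phasePow (a j) (e z)‖) * ∑ k, ‖phasePow (c k) (e z)‖ :=
          norm_vecMul_dotProduct_le hM _ _
      _ ≤ μ * 1 * 1 := by gcongr
      _ = μ := by ring
  have hF_bdd : BddAbove ((norm ∘ F) '' HadamardThreeLines.verticalClosedStrip 0 1) := by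
    refine ⟨μ * Fintype.card ι * Fintype.card κ, ?_⟩
    rintro _ ⟨z, hz, rfl⟩
    have hw := he_pos hz.1
    calc ‖F z‖ ≤ μ * (∑ j, ‖phasePow (a j) (e z)‖) * ∑ k, ‖phasePow (c k) (e z)‖ :=
          norm_vecMul_dotProduct_le hM _ _
      _ ≤ μ * (∑ _ : ι, 1) * ∑ _ : κ, 1 := by
          gcongr with j _ k _
          exacts [norm_phasePow_le_one hp ha j hw, norm_phasePow_le_one hp hc k hw]
      _ = μ * Fintype.card ι * Fintype.card κ := by simp
  have hFθ : F θ = (a ᵥ* M) ⬝ᵥ c := by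
    have : e θ = 1 := by simp only [e]; push_cast; exact div_self (by exact_mod_cast hθ₁.ne')
    simp only [F, this, phasePow_one]
  have := HadamardThreeLines.norm_le_interp_of_mem_verticalClosedStrip' zero_lt_one
    (z := θ) (by simpa [HadamardThreeLines.verticalClosedStrip] using hθ)
    hF.diffContOnCl hF_bdd h₀ h₁
  simpa [hFθ] using this

theorem exists_sum_norm_rpow_le_one_dotProduct_eq {p q : ℝ} (hpq : p.HolderConjugate q)
    (β : κ → ℂ) : ∃ γ : κ → ℂ, ∑ k, ‖γ k‖ ^ q ≤ 1 ∧
      β ⬝ᵥ γ = ((∑ k, ‖β k‖ ^ p) ^ p⁻¹ : ℝ) := by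
  set S := ∑ k, ‖β k‖ ^ p
  have hp := hpq.pos
  have hS : 0 ≤ S := by positivity
  rcases hS.eq_or_lt with hS0 | hSpos
  · refine ⟨0, by simp [Real.zero_rpow hpq.symm.pos.ne'], ?_⟩
    rw [← hS0, Real.zero_rpow (inv_ne_zero hp.ne')]
    simp
  -- the extremal vector of Hölder's inequality, normalized in `ℓ^q`
  set γ : κ → ℂ := fun k => ((‖β k‖ ^ (p - 2) / S ^ (1 - p⁻¹) : ℝ) : ℂ) * starRingEnd ℂ (β k)
  have hS' : 0 < S ^ (1 - p⁻¹) := by positivity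
  refine ⟨γ, le_of_eq ?_, ?_⟩
  · have hγ (k : κ) : ‖γ k‖ ^ q = ‖β k‖ ^ p / S := by
      have hβ : ‖β k‖ ^ (p - 2) * ‖β k‖ = ‖β k‖ ^ (p - 1) := by
        rcases (norm_nonneg (β k)).eq_or_lt with h | h
        · rw [← h, Real.zero_rpow hpq.sub_one_ne_zero, mul_zero]
        · rw [← Real.rpow_add_one h.ne']; ring_nf
      rw [norm_mul, Complex.norm_real, RCLike.norm_conj, Real.norm_of_nonneg (by positivity),
        div_mul_eq_mul_div, hβ, Real.div_rpow (by positivity) hS'.le,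
        ← Real.rpow_mul (norm_nonneg _), ← Real.rpow_mul hS, hpq.sub_one_mul_conj,
        hpq.one_sub_inv, inv_mul_cancel₀ hpq.symm.pos.ne', Real.rpow_one]
    rw [Finset.sum_congr rfl fun k _ => hγ k, ← Finset.sum_div, div_self hSpos.ne']
  · have hβγ (k : κ) : β k * γ k = ((‖β k‖ ^ p / S ^ (1 - p⁻¹) : ℝ) : ℂ) := by
      have hβ : ‖β k‖ ^ (p - 2) * ‖β k‖ ^ 2 = ‖β k‖ ^ p := by
        rw [← Real.rpow_two, ← Real.rpow_add' (norm_nonneg _) (by linarith)]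
        ring_nf
      rw [← hβ, mul_left_comm, Complex.mul_conj', mul_div_right_comm]
      push_cast
      ring
    rw [dotProduct, Finset.sum_congr rfl fun k _ => hβγ k, ← Complex.ofReal_sum, ← Finset.sum_div,
      Real.rpow_sub hSpos, Real.rpow_one, div_div_cancel₀ hSpos.ne']

theorem rpow_sum_norm_vecMul_le {M : Matrix ι κ ℂ} {μ θ : ℝ}
    (hμ : 0 ≤ μ) (hM : ∀ j k, ‖M j k‖ ≤ μ)
    (hM₂ : ∀ a c, ‖(a ᵥ* M) ⬝ᵥ c‖ ≤ √(∑ j, ‖a j‖ ^ 2) * √(∑ k, ‖c k‖ ^ 2))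
    (hθ : θ ∈ Ico (0 : ℝ) 1) (α : ι → ℂ) :
    (∑ k, ‖(α ᵥ* M) k‖ ^ (2 / (1 - θ))) ^ ((1 - θ) / 2) ≤
      μ ^ θ * (∑ j, ‖α j‖ ^ (2 / (1 + θ))) ^ ((1 + θ) / 2) := by
  obtain ⟨hθ₀, hθ₁⟩ := hθ
  have hpq : (2 / (1 - θ)).HolderConjugate (2 / (1 + θ)) := by
    simpa only [inv_div] using
      Real.HolderConjugate.inv_inv (a := (1 - θ) / 2) (b := (1 + θ) / 2) (by linarith)
        (by linarith) (by ring)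
  obtain ⟨γ, hγ, hβγ⟩ := exists_sum_norm_rpow_le_one_dotProduct_eq hpq (α ᵥ* M)
  rw [inv_div] at hβγ
  set S := ∑ j, ‖α j‖ ^ (2 / (1 + θ))
  rcases (show 0 ≤ S by positivity).eq_or_lt with hS | hS
  · have hα : α = 0 := by
      funext j
      have := (Finset.sum_eq_zero_iff_of_nonneg fun j _ => by positivity).1 hS.symm j
        (Finset.mem_univ j)
      simpa [Real.rpow_eq_zero_iff_of_nonneg, hpq.symm.pos.ne'] using this
    have hr₁ : (1 - θ) / 2 ≠ 0 := by linarith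
    have hr₂ : (1 + θ) / 2 ≠ 0 := by linarith
    simp [hα, ← hS, Real.zero_rpow hpq.pos.ne', Real.zero_rpow hr₁, Real.zero_rpow hr₂]
  set s := S ^ ((1 + θ) / 2)
  have hs : 0 < s := by positivity
  have ha : ∑ j, ‖(s⁻¹ • α) j‖ ^ (2 / (1 + θ)) ≤ 1 := by
    have hsS : s ^ (2 / (1 + θ)) = S := by
      rw [← Real.rpow_mul hS.le, div_mul_div_cancel₀ two_ne_zero,
        div_self (by linarith), Real.rpow_one]
    simp only [Pi.smul_apply, norm_smul, norm_inv, Real.norm_of_nonneg hs.le,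
      Real.mul_rpow (inv_nonneg.2 hs.le) (norm_nonneg _)]
    rw [← Finset.mul_sum, Real.inv_rpow hs.le, hsS, inv_mul_cancel₀ hS.ne']
  have := norm_vecMul_dotProduct_le_rpow hμ hM hM₂ ⟨hθ₀, hθ₁.le⟩ ha hγ
  rw [smul_vecMul, smul_dotProduct, hβγ, norm_smul, Complex.norm_real, norm_inv,
    Real.norm_of_nonneg hs.le, Real.norm_of_nonneg (by positivity), inv_mul_le_iff₀ hs] at this
  rwa [mul_comm] at this

end Interpolation

theorem HasDerivAt.nonpos_of_eventually_le_right {f : ℝ → ℝ} {f' a : ℝ} (hf : HasDerivAt f f' a)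
    (h : ∀ᶠ t in 𝓝[>] a, f t ≤ f a) : f' ≤ 0 := by
  have hmax : IsLocalMaxOn f (Ioi a) a := h
  have hone : (1 : ℝ) ∈ posTangentConeAt (Ioi a) a :=
    one_mem_posTangentConeAt_iff_frequently.2 (Eventually.frequently self_mem_nhdsWithin)
  simpa using hmax.hasFDerivWithinAt_nonpos hf.hasFDerivAt.hasFDerivWithinAt hone

theorem HasDerivAt.const_rpow_of_nonneg {f : ℝ → ℝ} {f' x a : ℝ} (ha : 0 ≤ a) (hfx : 0 < f x)
    (hf : HasDerivAt f f' x) : HasDerivAt (fun t => a ^ f t) (Real.log a * f' * a ^ f x) x := by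
  rcases ha.eq_or_lt with rfl | ha
  · have : (fun t => (0 : ℝ) ^ f t) =ᶠ[𝓝 x] fun _ => 0 :=
      (continuousAt_const.eventually_lt hf.continuousAt hfx).mono fun t ht =>
        Real.zero_rpow ht.ne'
    simpa using (hasDerivAt_const x (0 : ℝ)).congr_of_eventuallyEq this
  · exact hf.const_rpow ha

theorem hasDerivAt_log_sum_rpow {p : ι → ℝ} (hp : ∀ i, 0 ≤ p i) (hp₁ : ∑ i, p i = 1)
    {f : ℝ → ℝ} {f' x : ℝ} (hf : HasDerivAt f f' x) (hfx : f x = 1) :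
    HasDerivAt (fun t => Real.log (∑ i, p i ^ f t)) (f' * ∑ i, p i * Real.log (p i)) x := by
  have hsum := HasDerivAt.fun_sum (u := Finset.univ) fun i _ =>
    hf.const_rpow_of_nonneg (hp i) (by rw [hfx]; exact one_pos)
  have hlog := hsum.log (by simp [hfx, hp₁])
  convert hlog using 1
  simp only [hfx, Real.rpow_one, hp₁, div_one, Finset.mul_sum]
  exact Finset.sum_congr rfl fun i _ => by ring

theorem sum_rpow_pos {p : ι → ℝ} (hp : ∀ i, 0 ≤ p i) (hp₁ : ∑ i, p i = 1) (s : ℝ) :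
    0 < ∑ i, p i ^ s := by
  obtain ⟨i, -, hi⟩ := Finset.exists_ne_zero_of_sum_ne_zero (hp₁.symm ▸ one_ne_zero)
  exact Finset.sum_pos' (fun j _ => Real.rpow_nonneg (hp j) s)
    ⟨i, Finset.mem_univ i, Real.rpow_pos_of_pos ((hp i).lt_of_ne' hi) s⟩

theorem neg_two_mul_log_le_entropy_add [Fintype κ] {p : ι → ℝ} {q : κ → ℝ} (hp : ∀ i, 0 ≤ p i)
    (hp₁ : ∑ i, p i = 1) (hq : ∀ k, 0 ≤ q k) (hq₁ : ∑ k, q k = 1) {μ : ℝ} (hμ : 0 < μ)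
    (h : ∀ t ∈ Ioo (0 : ℝ) 1, (∑ k, q k ^ (1 - t)⁻¹) ^ ((1 - t) / 2) ≤
      μ ^ t * (∑ i, p i ^ (1 + t)⁻¹) ^ ((1 + t) / 2)) :
    -2 * Real.log μ ≤ (-∑ i, p i * Real.log (p i)) + (-∑ k, q k * Real.log (q k)) := by
  set g : ℝ → ℝ := fun t => (1 - t) / 2 * Real.log (∑ k, q k ^ (1 - t)⁻¹) -
    (1 + t) / 2 * Real.log (∑ i, p i ^ (1 + t)⁻¹) - t * Real.log μ
  have hg : HasDerivAt g ((∑ k, q k * Real.log (q k)) / 2 + (∑ i, p i * Real.log (p i)) / 2 -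
      Real.log μ) 0 := by
    have hinvP : HasDerivAt (fun t : ℝ => (1 + t)⁻¹) (-1) 0 := by
      simpa using ((hasDerivAt_id' (0 : ℝ)).const_add 1).fun_inv (by norm_num)
    have hinvQ : HasDerivAt (fun t : ℝ => (1 - t)⁻¹) 1 0 := by
      simpa using ((hasDerivAt_id' (0 : ℝ)).const_sub 1).fun_inv (by norm_num)
    have hP := hasDerivAt_log_sum_rpow hp hp₁ hinvP (by norm_num)
    have hQ := hasDerivAt_log_sum_rpow hq hq₁ hinvQ (by norm_num)
    have hcP : HasDerivAt (fun t : ℝ => (1 + t) / 2) (1 / 2) 0 :=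
      ((hasDerivAt_id' (0 : ℝ)).const_add 1).div_const 2
    have hcQ : HasDerivAt (fun t : ℝ => (1 - t) / 2) (-1 / 2) 0 :=
      ((hasDerivAt_id' (0 : ℝ)).const_sub 1).div_const 2
    refine (((hcQ.fun_mul hQ).fun_sub (hcP.fun_mul hP)).fun_sub
      ((hasDerivAt_id' (0 : ℝ)).mul_const (Real.log μ))).congr_deriv ?_
    simp only [sub_zero, add_zero, inv_one, Real.rpow_one, hp₁, hq₁, Real.log_one]
    ring
  have hg_le : ∀ᶠ t in 𝓝[>] 0, g t ≤ g 0 := by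
    filter_upwards [Ioo_mem_nhdsGT one_pos] with t ht
    have hP := sum_rpow_pos hp hp₁ (1 + t)⁻¹
    have hQ := sum_rpow_pos hq hq₁ (1 - t)⁻¹
    have hlog := Real.log_le_log (by positivity) (h t ht)
    rw [Real.log_rpow hQ, Real.log_mul (by positivity) (by positivity), Real.log_rpow hμ,
      Real.log_rpow hP] at hlog
    simp only [g, hp₁, hq₁, sub_zero, add_zero, inv_one, Real.rpow_one, Real.log_one, mul_zero,
      zero_mul]
    linarith
  linarith [hg.nonpos_of_eventually_le_right hg_le]

namespace OrthonormalBasis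

variable {𝕜 E : Type*} [RCLike 𝕜] [NormedAddCommGroup E] [InnerProductSpace 𝕜 E]

theorem exists_inner_ne_zero (b : OrthonormalBasis ι 𝕜 E) {y : E} (hy : y ≠ 0) :
    ∃ j, inner 𝕜 (b j) y ≠ 0 := by
  by_contra! h
  exact hy (by simpa [h] using (b.sum_repr' y).symm)

theorem vecMul_inner (b : OrthonormalBasis ι 𝕜 E) (x : E) (y : κ → E) :
    (fun j => inner 𝕜 x (b j)) ᵥ* Matrix.of (fun j k => inner 𝕜 (b j) (y k)) =
      fun k => inner 𝕜 x (y k) :=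
  funext fun k => b.sum_inner_mul_inner x (y k)

theorem norm_vecMul_inner_dotProduct_le [Fintype κ] (b : OrthonormalBasis ι 𝕜 E)
    (b' : OrthonormalBasis κ 𝕜 E) (a : ι → 𝕜) (c : κ → 𝕜) :
    ‖(a ᵥ* Matrix.of fun j k => inner 𝕜 (b j) (b' k)) ⬝ᵥ c‖ ≤
      √(∑ j, ‖a j‖ ^ 2) * √(∑ k, ‖c k‖ ^ 2) := by
  set u : EuclideanSpace 𝕜 ι := WithLp.toLp 2 (star a)
  set v : EuclideanSpace 𝕜 κ := WithLp.toLp 2 c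
  have h : (a ᵥ* Matrix.of fun j k => inner 𝕜 (b j) (b' k)) ⬝ᵥ c =
      inner 𝕜 (b.repr.symm u) (b'.repr.symm v) := by
    rw [← b.sum_repr_symm, ← b'.sum_repr_symm, sum_inner]
    simp only [inner_smul_left, inner_sum, inner_smul_right, dotProduct,
      vecMul, Finset.sum_mul, u, v]
    rw [Finset.sum_comm]
    simp [mul_comm, mul_left_comm]
  rw [h]
  refine (norm_inner_le_norm _ _).trans_eq ?_
  simp [EuclideanSpace.norm_eq, u, v]

end OrthonormalBasis

theorem maassen_uffink
    {N : ℕ} (Φ Ψ : OrthonormalBasis (Fin N) ℂ (EuclideanSpace ℂ (Fin N)))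
    (μ : ℝ) (hμ : μ = ⨆ j : Fin N, ⨆ k : Fin N, ‖(inner ℂ (Φ j) (Ψ k) : ℂ)‖)
    (x : EuclideanSpace ℂ (Fin N)) (hx : ‖x‖ = 1) :
    (-∑ n, ‖(inner ℂ x (Φ n) : ℂ)‖ ^ 2 * Real.log (‖(inner ℂ x (Φ n) : ℂ)‖ ^ 2)) +
    (-∑ n, ‖(inner ℂ x (Ψ n) : ℂ)‖ ^ 2 * Real.log (‖(inner ℂ x (Ψ n) : ℂ)‖ ^ 2)) ≥
      -2 * Real.log μ := by
  have hp₁ : ∑ n, ‖(inner ℂ x (Φ n) : ℂ)‖ ^ 2 = 1 := by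
    rw [Φ.sum_sq_norm_inner_left, hx, one_pow]
  have hq₁ : ∑ n, ‖(inner ℂ x (Ψ n) : ℂ)‖ ^ 2 = 1 := by
    rw [Ψ.sum_sq_norm_inner_left, hx, one_pow]
  have hM (j k : Fin N) : ‖(inner ℂ (Φ j) (Ψ k) : ℂ)‖ ≤ μ :=
    hμ ▸ le_ciSup₂ (f := fun j k => ‖(inner ℂ (Φ j) (Ψ k) : ℂ)‖)
      (finite_iUnion fun _ => finite_range _).bddAbove j k
  have hμ₀ : 0 < μ := by
    obtain ⟨k, -, -⟩ := Finset.exists_ne_zero_of_sum_ne_zero (hq₁.symm ▸ one_ne_zero)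
    obtain ⟨j, hj⟩ := Φ.exists_inner_ne_zero (Ψ.orthonormal.ne_zero k)
    exact (norm_pos_iff.2 hj).trans_le (hM j k)
  refine neg_two_mul_log_le_entropy_add (fun _ => by positivity) hp₁ (fun _ => by positivity) hq₁
    hμ₀ fun t ht => ?_
  have := rpow_sum_norm_vecMul_le
    (M := Matrix.of fun j k => inner ℂ (Φ j) (Ψ k)) hμ₀.le hM
    (Φ.norm_vecMul_inner_dotProduct_le Ψ) ⟨ht.1.le, ht.2⟩ fun j => inner ℂ x (Φ j)
  rw [Φ.vecMul_inner] at this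
  simpa only [← Real.rpow_natCast_mul (norm_nonneg _), Nat.cast_ofNat, ← div_eq_mul_inv]
    using this
end

section
/- Let P_T be the orthogonal projection onto functions supported in T ⊂ ℝ and P_F the projection onto functions whose Fourier transform is supported in F ⊂ ℝ, both of finite measure. If |T|·|F| < 1, then the operator norm of P_T P_F on L²(ℝ) is strictly less than 1. -/
open MeasureTheory FourierTransform
open scoped ContDiff ENNReal

/-! For `g = 1_F · 𝓕 f`, the inverse Fourier transform is bounded pointwise by
`‖g‖₁ ≤ |F|^{1/2} ‖𝓕 f‖₂` (Cauchy–Schwarz on `F`), so restricting it to `T` costs another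
factor `|T|^{1/2}` in `L²`; Plancherel `‖𝓕 f‖₂ = ‖f‖₂` then gives the constant `√(|T| |F|) < 1`.
This is the Hilbert–Schmidt bound for the kernel `1_T(x) 𝐞(⟪ξ, x⟫) 1_F(ξ)`. -/

section Indicator

variable {α ε : Type*} [MeasurableSpace α] {μ : Measure α} {s : Set α}

theorem eLpNorm_indicator_le_eLpNorm_mul_rpow_measure [NormedAddCommGroup ε] {p q : ℝ≥0∞}
    (hpq : p ≤ q) (hs : MeasurableSet s) {f : α → ε} (hf : AEStronglyMeasurable f μ) :
    eLpNorm (s.indicator f) p μ ≤ eLpNorm f q μ * μ s ^ (1 / p.toReal - 1 / q.toReal) := by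
  rw [eLpNorm_indicator_eq_eLpNorm_restrict hs, ← Measure.restrict_apply_univ]
  exact (eLpNorm_le_eLpNorm_mul_rpow_measure_univ hpq hf.restrict).trans
    (mul_le_mul_left (eLpNorm_restrict_le f q μ s) _)

theorem eLpNorm_indicator_le_of_forall_mem_enorm_le [TopologicalSpace ε]
    [ESeminormedAddMonoid ε] {p : ℝ≥0∞} (hs : MeasurableSet s) {f : α → ε} {C : ℝ≥0∞}
    (hf : ∀ x ∈ s, ‖f x‖ₑ ≤ C) :
    eLpNorm (s.indicator f) p μ ≤ C * μ s ^ p.toReal⁻¹ := by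
  rw [eLpNorm_indicator_eq_eLpNorm_restrict hs, ← Measure.restrict_apply_univ]
  exact eLpNorm_le_of_ae_enorm_bound ((ae_restrict_iff' hs).2 (.of_forall hf))

end Indicator

namespace Real

variable {V E : Type*} [NormedAddCommGroup V] [InnerProductSpace ℝ V] [FiniteDimensional ℝ V]
  [MeasurableSpace V] [BorelSpace V] [NormedAddCommGroup E]

section NormedSpace

variable [NormedSpace ℂ E]

theorem fourier_eq_zero_of_not_integrable {f : V → E} (hf : ¬Integrable f) : 𝓕 f = 0 := by
  ext w
  rw [fourier_eq, integral_undef (by rwa [fourierIntegral_convergent_iff]), Pi.zero_apply]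

theorem continuous_fourier [CompleteSpace E] (f : V → E) : Continuous (𝓕 f) := by
  by_cases hf : Integrable f
  · exact VectorFourier.fourierIntegral_continuous continuous_fourierChar continuous_inner hf
  · rw [fourier_eq_zero_of_not_integrable hf]
    exact continuous_zero

theorem enorm_fourierInv_le_eLpNorm_one (g : V → E) (x : V) :
    ‖𝓕⁻ g x‖ₑ ≤ eLpNorm g 1 volume := by
  rw [fourierInv_eq, eLpNorm_one_eq_lintegral_enorm]
  refine (enorm_integral_le_lintegral_enorm _).trans_eq ?_
  congr with v
  rw [← ofReal_norm, Circle.norm_smul, ofReal_norm]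

theorem integral_fourier_smul_eq [CompleteSpace E] {φ : V → ℂ} {f : V → E} (hφ : Integrable φ)
    (hf : Integrable f) :
    ∫ ξ, 𝓕 φ ξ • f ξ = ∫ x, φ x • 𝓕 f x := by
  simpa using! VectorFourier.integral_fourierIntegral_smul_eq_flip (L := innerₗ V)
    continuous_fourierChar continuous_inner hφ hf

end NormedSpace

variable [InnerProductSpace ℂ E] [CompleteSpace E]

/-- The `L²` Fourier transform of an `L¹ ∩ L²` function is its Fourier integral: both define the
same tempered distribution, by self-adjointness of `𝓕` against Schwartz test functions. -/
theorem fourier_toLp_ae_eq {f : V → E} (hf1 : Integrable f) (hf2 : MemLp f 2) :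
    ((𝓕 (hf2.toLp f) : Lp E 2 (volume : Measure V)) : V → E) =ᵐ[volume] 𝓕 f := by
  refine ae_eq_of_integral_contDiff_smul_eq ((Lp.memLp _).locallyIntegrable one_le_two)
    (continuous_fourier f).locallyIntegrable fun g g_smooth g_cpt => ?_
  set φ : SchwartzMap V ℂ := (g_cpt.comp_left Complex.ofReal_zero).toSchwartzMap
    (Complex.ofRealCLM.contDiff.comp g_smooth)
  have hφ : ∀ x, φ x = g x := fun x => rfl
  calc ∫ x, g x • (𝓕 (hf2.toLp f) : Lp E 2 (volume : Measure V)) x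
      = Lp.toTemperedDistribution (𝓕 (hf2.toLp f)) φ := by
        simp only [Lp.toTemperedDistribution_apply, hφ, Complex.coe_smul]
    _ = Lp.toTemperedDistribution (hf2.toLp f) (𝓕 φ) := by
        rw [← Lp.fourier_toTemperedDistribution_eq]; rfl
    _ = ∫ x, 𝓕 φ x • f x := by
        rw [Lp.toTemperedDistribution_apply]
        exact integral_congr_ae (by filter_upwards [hf2.coeFn_toLp] with x hx; rw [hx])
    _ = ∫ x, g x • 𝓕 f x := by
        rw [SchwartzMap.fourier_coe, integral_fourier_smul_eq φ.integrable hf1]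
        simp only [hφ, Complex.coe_smul]

theorem eLpNorm_fourier_eq_of_integrable {f : V → E} (hf1 : Integrable f) (hf2 : MemLp f 2) :
    eLpNorm (𝓕 f) 2 volume = eLpNorm f 2 volume := by
  rw [← eLpNorm_congr_ae (fourier_toLp_ae_eq hf1 hf2), ← Lp.enorm_def,
    ← eLpNorm_congr_ae hf2.coeFn_toLp, ← Lp.enorm_def]
  exact (Lp.fourierTransformₗᵢ V E).enorm_map _

-- Here `𝓕 f` is the Fourier integral, which is `0` when `f` is not integrable.
theorem eLpNorm_fourier_le {f : V → E} (hf : MemLp f 2) :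
    eLpNorm (𝓕 f) 2 volume ≤ eLpNorm f 2 volume := by
  by_cases hf1 : Integrable f
  · exact (eLpNorm_fourier_eq_of_integrable hf1 hf).le
  · simp [fourier_eq_zero_of_not_integrable hf1]

end Real

section TimeFrequency

variable {V E : Type*} [NormedAddCommGroup V] [InnerProductSpace ℝ V] [FiniteDimensional ℝ V]
  [MeasurableSpace V] [BorelSpace V] [NormedAddCommGroup E] [NormedSpace ℂ E]

theorem eLpNorm_indicator_fourierInv_indicator_le {T F : Set V} (hT : MeasurableSet T)
    (hF : MeasurableSet F) {g : V → E} (hg : AEStronglyMeasurable g) :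
    eLpNorm (T.indicator (𝓕⁻ (F.indicator g))) 2 volume ≤
      (volume T * volume F) ^ (1 / 2 : ℝ) * eLpNorm g 2 volume := by
  have hFg :
      eLpNorm (F.indicator g) 1 volume ≤ eLpNorm g 2 volume * volume F ^ (1 / 2 : ℝ) := by
    convert eLpNorm_indicator_le_eLpNorm_mul_rpow_measure one_le_two hF hg using 3
    norm_num
  calc eLpNorm (T.indicator (𝓕⁻ (F.indicator g))) 2 volume
      ≤ eLpNorm (F.indicator g) 1 volume * volume T ^ (1 / 2 : ℝ) := by
        convert eLpNorm_indicator_le_of_forall_mem_enorm_le hT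
          (fun x _ => Real.enorm_fourierInv_le_eLpNorm_one (F.indicator g) x) using 3
        norm_num
    _ ≤ eLpNorm g 2 volume * volume F ^ (1 / 2 : ℝ) * volume T ^ (1 / 2 : ℝ) := by gcongr
    _ = (volume T * volume F) ^ (1 / 2 : ℝ) * eLpNorm g 2 volume := by
        rw [ENNReal.mul_rpow_of_nonneg _ _ (by norm_num)]; ring

end TimeFrequency

theorem gerchberg_papoulis_contraction_general
    (T F : Set ℝ) (hT : MeasurableSet T) (hF : MeasurableSet F)
    (hTF : volume T * volume F < 1) :
    ∃ c : ℝ, 0 ≤ c ∧ c < 1 ∧ ∀ f : ℝ → ℂ, MemLp f 2 volume →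
      eLpNorm (T.indicator (𝓕⁻ (F.indicator (𝓕 f)))) 2 volume ≤
        ENNReal.ofReal c * eLpNorm f 2 volume := by
  refine ⟨(volume T * volume F).toReal ^ (1 / 2 : ℝ), by positivity, ?_, fun f hf => ?_⟩
  · exact Real.rpow_lt_one ENNReal.toReal_nonneg
      (ENNReal.toReal_lt_of_lt_ofReal (by simpa using hTF)) (by norm_num)
  · rw [← ENNReal.ofReal_rpow_of_nonneg ENNReal.toReal_nonneg (by norm_num),
      ENNReal.ofReal_toReal (hTF.trans ENNReal.one_lt_top).ne]
    calc eLpNorm (T.indicator (𝓕⁻ (F.indicator (𝓕 f)))) 2 volume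
        ≤ (volume T * volume F) ^ (1 / 2 : ℝ) * eLpNorm (𝓕 f) 2 volume :=
          eLpNorm_indicator_fourierInv_indicator_le hT hF
            (Real.continuous_fourier f).aestronglyMeasurable
      _ ≤ (volume T * volume F) ^ (1 / 2 : ℝ) * eLpNorm f 2 volume := by
          gcongr; exact Real.eLpNorm_fourier_le hf

theorem gerchberg_papoulis_contraction
    (T F : Set ℝ) (hT : MeasurableSet T) (hF : MeasurableSet F)
    (hTfin : volume T < ⊤) (hFfin : volume F < ⊤)
    (hTF : volume T * volume F < 1) :
    ∃ c : ℝ, 0 ≤ c ∧ c < 1 ∧ ∀ f : ℝ → ℂ, MemLp f 2 volume →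
      eLpNorm (T.indicator (𝓕⁻ (F.indicator (𝓕 f)))) 2 volume ≤
        ENNReal.ofReal c * eLpNorm f 2 volume :=
  gerchberg_papoulis_contraction_general T F hT hF hTF
end

section
/- Let Φ, Ψ be orthonormal bases of ℂ^N with mutual coherence μ, and let T, F be index subsets with |T|·|F| < 1/μ². Then for every x ∈ ℂ^N with coefficient vectors α (in Φ) and β (in Ψ): ‖α‖_{ℓ²(T^c)} + ‖β‖_{ℓ²(F^c)} ≥ (1 + 1/(1 − μ√(|T||F|)))^{−1} ‖x‖₂. -/
/-!
Write `P_S` (resp. `Q_S`) for the orthogonal projection onto the span of the `Φ`- (resp. `Ψ`-)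
basis vectors indexed by `S`. For `y = P_T x`, each coefficient satisfies
`|⟨ψ_k, y⟩| ≤ μ ∑_{t ∈ T} |α_t| ≤ μ √|T| ‖y‖`, so `‖Q_F P_T x‖ ≤ μ √(|T||F|) ‖x‖`. Splitting
`x = P_T x + P_{Tᶜ} x` then gives `‖Q_F x‖ ≤ μ √(|T||F|) ‖x‖ + ‖P_{Tᶜ} x‖`, and
`‖x‖ ≤ ‖Q_F x‖ + ‖Q_{Fᶜ} x‖` yields `(1 - μ √(|T||F|)) ‖x‖ ≤ ‖α‖_{ℓ²(Tᶜ)} + ‖β‖_{ℓ²(Fᶜ)}`,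
which is slightly stronger than the claim.
-/

open Finset

namespace OrthonormalBasis

variable {ι 𝕜 E : Type*} [Fintype ι] [RCLike 𝕜] [NormedAddCommGroup E] [InnerProductSpace 𝕜 E]

noncomputable def coherence (b b' : OrthonormalBasis ι 𝕜 E) : ℝ :=
  ⨆ j, ⨆ k, ‖(inner 𝕜 (b j) (b' k) : 𝕜)‖

theorem coherence_nonneg (b b' : OrthonormalBasis ι 𝕜 E) : 0 ≤ coherence b b' :=
  Real.iSup_nonneg fun _ => Real.iSup_nonneg fun _ => norm_nonneg _

theorem norm_inner_le_coherence (b b' : OrthonormalBasis ι 𝕜 E) (j k : ι) :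
    ‖(inner 𝕜 (b' k) (b j) : 𝕜)‖ ≤ coherence b b' := by
  rw [norm_inner_symm]
  exact (le_ciSup (Finite.bddAbove_range fun k => ‖(inner 𝕜 (b j) (b' k) : 𝕜)‖) k).trans
    (le_ciSup (Finite.bddAbove_range fun j => ⨆ k, ‖(inner 𝕜 (b j) (b' k) : 𝕜)‖) j)

noncomputable def projOn (b : OrthonormalBasis ι 𝕜 E) (s : Finset ι) (x : E) : E :=
  ∑ i ∈ s, (inner 𝕜 (b i) x : 𝕜) • b i

variable (b : OrthonormalBasis ι 𝕜 E) (s : Finset ι)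

theorem projOn_add (x y : E) : b.projOn s (x + y) = b.projOn s x + b.projOn s y := by
  simp only [projOn, inner_add_right, add_smul, sum_add_distrib]

theorem projOn_add_projOn_compl [DecidableEq ι] (x : E) : b.projOn s x + b.projOn sᶜ x = x := by
  rw [projOn, projOn, sum_add_sum_compl, b.sum_repr']

theorem inner_projOn [DecidableEq ι] (x : E) (j : ι) :
    (inner 𝕜 (b j) (b.projOn s x) : 𝕜) = if j ∈ s then inner 𝕜 (b j) x else 0 := by
  simp [projOn, inner_sum, inner_smul_right, orthonormal_iff_ite.mp b.orthonormal]

theorem norm_projOn_sq (x : E) :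
    ‖b.projOn s x‖ ^ 2 = ∑ i ∈ s, ‖(inner 𝕜 (b i) x : 𝕜)‖ ^ 2 := by
  classical
  simp [← b.sum_sq_norm_inner_right (b.projOn s x), inner_projOn, apply_ite, sum_ite_mem]

theorem norm_projOn (x : E) :
    ‖b.projOn s x‖ = √(∑ i ∈ s, ‖(inner 𝕜 (b i) x : 𝕜)‖ ^ 2) := by
  rw [← norm_projOn_sq, Real.sqrt_sq (norm_nonneg _)]

theorem norm_projOn_le (x : E) : ‖b.projOn s x‖ ≤ ‖x‖ := by
  rw [← sq_le_sq₀ (norm_nonneg _) (norm_nonneg _), norm_projOn_sq]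
  exact b.orthonormal.sum_inner_products_le x

variable (b' : OrthonormalBasis ι 𝕜 E) (t : Finset ι)

theorem norm_inner_projOn_sq_le (x : E) (k : ι) :
    ‖(inner 𝕜 (b' k) (b.projOn s x) : 𝕜)‖ ^ 2 ≤ coherence b b' ^ 2 * #s * ‖b.projOn s x‖ ^ 2 := by
  have hμ := coherence_nonneg b b'
  have hsum : ‖(inner 𝕜 (b' k) (b.projOn s x) : 𝕜)‖ ≤
      coherence b b' * ∑ i ∈ s, ‖(inner 𝕜 (b i) x : 𝕜)‖ := by
    rw [projOn, inner_sum, mul_sum]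
    refine (norm_sum_le _ _).trans (sum_le_sum fun i _ => ?_)
    rw [inner_smul_right, norm_mul, mul_comm]
    exact mul_le_mul_of_nonneg_right (b.norm_inner_le_coherence b' i k) (norm_nonneg _)
  calc ‖(inner 𝕜 (b' k) (b.projOn s x) : 𝕜)‖ ^ 2
      ≤ (coherence b b' * ∑ i ∈ s, ‖(inner 𝕜 (b i) x : 𝕜)‖) ^ 2 := by gcongr
    _ = coherence b b' ^ 2 * (∑ i ∈ s, ‖(inner 𝕜 (b i) x : 𝕜)‖) ^ 2 := mul_pow _ _ _
    _ ≤ coherence b b' ^ 2 * (#s * ∑ i ∈ s, ‖(inner 𝕜 (b i) x : 𝕜)‖ ^ 2) := by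
      gcongr
      exact sq_sum_le_card_mul_sum_sq
    _ = coherence b b' ^ 2 * #s * ‖b.projOn s x‖ ^ 2 := by rw [norm_projOn_sq, mul_assoc]

theorem norm_projOn_projOn_le (x : E) :
    ‖b'.projOn t (b.projOn s x)‖ ≤ coherence b b' * √(#s * #t) * ‖x‖ := by
  have hsq : ‖b'.projOn t (b.projOn s x)‖ ^ 2 ≤ (coherence b b' * √(#s * #t) * ‖x‖) ^ 2 :=
    calc ‖b'.projOn t (b.projOn s x)‖ ^ 2
        ≤ ∑ _k ∈ t, coherence b b' ^ 2 * #s * ‖b.projOn s x‖ ^ 2 := by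
          rw [norm_projOn_sq]
          exact sum_le_sum fun k _ => norm_inner_projOn_sq_le b s b' x k
      _ ≤ ∑ _k ∈ t, coherence b b' ^ 2 * #s * ‖x‖ ^ 2 := by
          gcongr
          exact norm_projOn_le b s x
      _ = (coherence b b' * √(#s * #t) * ‖x‖) ^ 2 := by
          rw [sum_const, nsmul_eq_mul, mul_pow, mul_pow, Real.sq_sqrt (by positivity)]
          ring
  have := coherence_nonneg b b'
  exact (sq_le_sq₀ (norm_nonneg _) (by positivity)).mp hsq

theorem one_sub_coherence_mul_norm_le [DecidableEq ι] (x : E) :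
    (1 - coherence b b' * √(#s * #t)) * ‖x‖ ≤ ‖b.projOn sᶜ x‖ + ‖b'.projOn tᶜ x‖ := by
  have hx : ‖x‖ ≤ ‖b'.projOn t x‖ + ‖b'.projOn tᶜ x‖ := by
    conv_lhs => rw [← b'.projOn_add_projOn_compl t x]
    exact norm_add_le _ _
  have hlow : ‖b'.projOn t x‖ ≤ coherence b b' * √(#s * #t) * ‖x‖ + ‖b.projOn sᶜ x‖ := by
    conv_lhs => rw [← b.projOn_add_projOn_compl s x, projOn_add]
    exact (norm_add_le _ _).trans
      (add_le_add (norm_projOn_projOn_le b s b' t x) (norm_projOn_le b' t _))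
  linarith

end OrthonormalBasis

theorem mul_sqrt_lt_one_of_lt_one_div_sq {μ a : ℝ} (hμ : 0 ≤ μ) (ha : a < 1 / μ ^ 2) :
    μ * √a < 1 := by
  rcases hμ.eq_or_lt with rfl | hμ
  · simp
  rw [← Real.sqrt_sq hμ.le, ← Real.sqrt_mul (sq_nonneg μ), Real.sqrt_lt' one_pos, one_pow]
  rw [mul_comm]
  exact (lt_div_iff₀ (by positivity)).mp ha

theorem ghobber_jaming
    {N : ℕ} (Φ Ψ : OrthonormalBasis (Fin N) ℂ (EuclideanSpace ℂ (Fin N)))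
    (μ : ℝ) (hμ : μ = ⨆ j : Fin N, ⨆ k : Fin N, ‖(inner ℂ (Φ j) (Ψ k) : ℂ)‖)
    (T F : Finset (Fin N)) (hTF : ((T.card : ℝ) * F.card) < 1 / μ ^ 2)
    (x : EuclideanSpace ℂ (Fin N)) :
    Real.sqrt (∑ n ∈ Tᶜ, ‖(inner ℂ x (Φ n) : ℂ)‖ ^ 2) +
      Real.sqrt (∑ n ∈ Fᶜ, ‖(inner ℂ x (Ψ n) : ℂ)‖ ^ 2) ≥
      (1 + 1 / (1 - μ * Real.sqrt ((T.card : ℝ) * F.card)))⁻¹ * ‖x‖ := by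
  replace hμ : μ = Φ.coherence Ψ := hμ
  subst hμ
  have hc := mul_sqrt_lt_one_of_lt_one_div_sq (Φ.coherence_nonneg Ψ) hTF
  have key := Φ.one_sub_coherence_mul_norm_le T Ψ F x
  simp_rw [norm_inner_symm x, ← OrthonormalBasis.norm_projOn]
  have hconst : (1 + 1 / (1 - Φ.coherence Ψ * √(#T * #F)))⁻¹ ≤ 1 - Φ.coherence Ψ * √(#T * #F) :=
    inv_le_of_inv_le₀ (by linarith) (by rw [one_div]; linarith)
  exact (mul_le_mul_of_nonneg_right hconst (norm_nonneg x)).trans key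
end
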